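/- Every tensor in the image of P is completely traceless: for T in the image of P, T_{aab} = T_{aba} = T_{baa} = 0 (summing over a, for each b). -/

import Mathlib

abbrev Tens (N : ℕ) := Fin N → Fin N → Fin N → ℝ

noncomputable def ip {N : ℕ} (T U : Tens N) : ℝ := ∑ a, ∑ b, ∑ c, T a b c * U a b c

noncomputable def kd {N : ℕ} (i j : Fin N) : ℝ := if i = j then 1 else 0

/-- The explicit kernel of the projector P onto traceless mixed-symmetry tensors. -/
noncomputable def Pker (N : ℕ) (a1 a2 a3 b1 b2 b3 : Fin N) : ℝ :=
  (1/3 : ℝ) * (kd a1 b1 * kd a2 b2 * kd a3 b3 - kd a1 b3 * kd a2 b2 * kd a3 b1)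
  + (1/6 : ℝ) * (kd a1 b2 * kd a2 b1 * kd a3 b3 + kd a1 b1 * kd a2 b3 * kd a3 b2)
  - (1/6 : ℝ) * (kd a1 b2 * kd a2 b3 * kd a3 b1 + kd a1 b3 * kd a2 b1 * kd a3 b2)
  + (2 * ((N : ℝ) - 1))⁻¹ * (kd a1 b3 * kd a2 a3 * kd b1 b2 + kd a1 a2 * kd a3 b1 * kd b2 b3)
  - (2 * ((N : ℝ) - 1))⁻¹ * (kd a1 b1 * kd a2 a3 * kd b2 b3 + kd a1 a2 * kd a3 b3 * kd b1 b2)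

noncomputable def Pmap (N : ℕ) : Tens N →ₗ[ℝ] Tens N where
  toFun T := fun a1 a2 a3 => ∑ b1, ∑ b2, ∑ b3, Pker N a1 a2 a3 b1 b2 b3 * T b1 b2 b3
  map_add' T U := by
    funext a1 a2 a3
    simp [Pi.add_apply, mul_add, Finset.sum_add_distrib]
  map_smul' c T := by
    funext a1 a2 a3
    simp only [Pi.smul_apply, smul_eq_mul, Finset.mul_sum]
    refine Finset.sum_congr rfl fun b1 _ => Finset.sum_congr rfl fun b2 _ =>
      Finset.sum_congr rfl fun b3 _ => by simp only [RingHom.id_apply]; ring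

/-- A rank-3 tensor is completely traceless if all three of its traces vanish. -/
def Traceless {N : ℕ} (T : Tens N) : Prop :=
  ∀ b : Fin N, (∑ a, T a a b = 0) ∧ (∑ a, T a b a = 0) ∧ (∑ a, T b a a = 0)

/-!
The kernel is antisymmetric under `a1 ↔ a3`, hence so is every tensor in the image of `P`. This
kills the `(1,3)` trace and turns the `(2,3)` trace into minus the `(1,2)` trace. Contracting
`a1 = a2` in the kernel leaves `(1/2 - (N - 1) / (2 (N - 1))) (δ_{b1 b2} δ_{b b3} - δ_{b2 b3} δ_{b b1})`:
the coefficient of the broken terms is exactly the one that cancels the unbroken contribution.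
-/

lemma kd_comm {N : ℕ} (i j : Fin N) : kd i j = kd j i := by
  simp [kd, eq_comm]

lemma sum_kd_mul_kd {N : ℕ} (x y : Fin N) : ∑ a, kd a x * kd a y = kd x y := by
  simp [kd, eq_comm]

lemma sum_kd_self (N : ℕ) : ∑ a : Fin N, kd a a = N := by
  simp [kd]

lemma Pker_antisymm (N : ℕ) (a1 a2 a3 b1 b2 b3 : Fin N) :
    Pker N a3 a2 a1 b1 b2 b3 = -Pker N a1 a2 a3 b1 b2 b3 := by
  simp only [Pker, kd_comm a2 a1, kd_comm a3 a2]
  ring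

lemma sum_Pker_self_self (N : ℕ) (b b1 b2 b3 : Fin N) :
    ∑ a, Pker N a a b b1 b2 b3
      = (1 / 2 - (2 * ((N : ℝ) - 1))⁻¹ * (N - 1)) * (kd b1 b2 * kd b b3 - kd b2 b3 * kd b b1) := by
  simp only [Pker, mul_add, mul_sub, Finset.sum_add_distrib, Finset.sum_sub_distrib,
    ← Finset.mul_sum, ← Finset.sum_mul, sum_kd_mul_kd, sum_kd_self]
  simp only [kd_comm]
  ring

lemma sum_Pker_self_self_eq_zero {N : ℕ} (hN : N ≠ 1) (b b1 b2 b3 : Fin N) :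
    ∑ a, Pker N a a b b1 b2 b3 = 0 := by
  have hN' : (N : ℝ) - 1 ≠ 0 := sub_ne_zero.2 (by exact_mod_cast hN)
  rw [sum_Pker_self_self]
  field_simp
  ring

lemma Pmap_apply (N : ℕ) (S : Tens N) (a1 a2 a3 : Fin N) :
    Pmap N S a1 a2 a3 = ∑ b1, ∑ b2, ∑ b3, Pker N a1 a2 a3 b1 b2 b3 * S b1 b2 b3 := rfl

lemma Pmap_apply_antisymm (N : ℕ) (S : Tens N) (a1 a2 a3 : Fin N) :
    Pmap N S a3 a2 a1 = -Pmap N S a1 a2 a3 := by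
  simp only [Pmap_apply, Pker_antisymm N a1 a2 a3, neg_mul, Finset.sum_neg_distrib]

lemma sum_Pmap_apply_self_self (N : ℕ) (S : Tens N) (b : Fin N) :
    ∑ a, Pmap N S a a b = ∑ b1, ∑ b2, ∑ b3, (∑ a, Pker N a a b b1 b2 b3) * S b1 b2 b3 := by
  simp only [Pmap_apply, Finset.sum_mul]
  rw [Finset.sum_comm]
  refine Finset.sum_congr rfl fun b1 _ => ?_
  rw [Finset.sum_comm]
  exact Finset.sum_congr rfl fun b2 _ => Finset.sum_comm

theorem P_range_traceless (N : ℕ) (hN : 2 ≤ N) :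
    ∀ T ∈ LinearMap.range (Pmap N), Traceless T := by
  rintro _ ⟨S, rfl⟩ b
  have htrace : ∑ a, Pmap N S a a b = 0 := by
    simp [sum_Pmap_apply_self_self, sum_Pker_self_self_eq_zero (by omega : N ≠ 1)]
  refine ⟨htrace, Finset.sum_eq_zero fun a _ => ?_, ?_⟩
  · linarith [Pmap_apply_antisymm N S a b a]
  · simp [Pmap_apply_antisymm N S _ _ b, htrace]
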